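/- arXiv:2211.09052 — 4 statements merged into one kernel-verified Lean document; each statement's English description precedes it below -/
import Mathlib

section
/- Let S = Σ_{i=1}^q Q_i⟦s_i⟧ ∈ 𝒜_Q(ℝⁿ) with the s_i pairwise distinct and Σ_{i=1}^q Q_i = Q, and let 0 < ε < 1/4. If T ∈ 𝒜_Q(ℝⁿ) satisfies spt(T) ⊂ 𝒫_ε(S) and T is balanced with respect to S and ε, with natural splitting T = Σ_{i=1}^q T_i, then 𝒢(S,T)² = Σ_{i=1}^q 𝒢(T_i, Q_i⟦s_i⟧)². -/
open scoped BigOperators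

/-- The distance `𝒢` on the space of `Q`-points, defined on labelings of the points
(indexed by an arbitrary finite type `ι`): the minimum over permutations of the
square root of the sum of squared distances. -/
noncomputable def Gdist {ι : Type*} [Fintype ι] {n : ℕ}
    (p s : ι → EuclideanSpace ℝ (Fin n)) : ℝ :=
  ⨅ σ : Equiv.Perm ι, Real.sqrt (∑ i, dist (p i) (s (σ i)) ^ 2)

/-- `rsep s i = min_{j ≠ i} |s i - s j|`, the quantity `r_i(S)` for the distinct
points `s_1, …, s_q` of `S`. -/
noncomputable def rsep {n q : ℕ} (s : Fin q → EuclideanSpace ℝ (Fin n)) (i : Fin q) : ℝ :=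
  ⨅ j : {j : Fin q // j ≠ i}, dist (s i) (s (j : Fin q))

/-- Let `S = Σ_{i=1}^q Q_i⟦s_i⟧` with the `s_i` pairwise distinct and
`Σ Q_i = Q`, and `0 < ε < 1/4`. If `T ∈ 𝒜_Q(ℝⁿ)` has support in `𝒫_ε(S)` and is balanced
(encoded by indexing the points of `T` by `Σ i, Fin (Q_i)`, with the `j`-th point of the
`i`-th block lying in `B_{ε r_i}(s_i)`), then
`𝒢(S,T)² = Σ_i 𝒢(T_i, Q_i⟦s_i⟧)²` where `T_i` is the `i`-th block of the splitting. -/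
theorem stmt0 (n Q q : ℕ) (ε : ℝ) (hε0 : 0 < ε) (hε : ε < 1 / 4)
    (s : Fin q → EuclideanSpace ℝ (Fin n)) (hs : Function.Injective s)
    (Qi : Fin q → ℕ) (hQi : ∀ i, 0 < Qi i) (hQ : ∑ i, Qi i = Q)
    (T : (Σ i : Fin q, Fin (Qi i)) → EuclideanSpace ℝ (Fin n))
    (hT : ∀ x : Σ i : Fin q, Fin (Qi i), dist (T x) (s x.1) < ε * rsep s x.1) :
    Gdist (fun x : Σ i : Fin q, Fin (Qi i) => s x.1) T ^ 2
      = ∑ i : Fin q,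
          Gdist (fun j : Fin (Qi i) => T ⟨i, j⟩) (fun _ : Fin (Qi i) => s i) ^ 2 := by
  -- pointwise key inequality: the correct center is the closest one
  have hkey : ∀ (j : Fin q) (y : Σ i : Fin q, Fin (Qi i)),
      dist (s y.1) (T y) ≤ dist (s j) (T y) := by
    intro j y
    rcases eq_or_ne j y.1 with h | h
    · rw [h]
    · have hne : Nonempty {k : Fin q // k ≠ y.1} := ⟨⟨j, h⟩⟩
      have hr : rsep s y.1 ≤ dist (s y.1) (s j) :=
        ciInf_le (Finite.bddBelow_range _) (⟨j, h⟩ : {k : Fin q // k ≠ y.1})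
      have hTy := hT y
      have hrpos : 0 < rsep s y.1 := by
        by_contra hc
        push_neg at hc
        nlinarith [dist_nonneg (x := T y) (y := s y.1)]
      have h1 : dist (s y.1) (T y) < ε * rsep s y.1 := by
        rw [dist_comm]; exact hTy
      have h2 : dist (s y.1) (s j) ≤ dist (s y.1) (T y) + dist (T y) (s j) :=
        dist_triangle _ _ _
      have h3 : dist (T y) (s j) = dist (s j) (T y) := dist_comm _ _
      nlinarith
  have hval : Gdist (fun x : Σ i : Fin q, Fin (Qi i) => s x.1) T
      = Real.sqrt (∑ x : Σ i : Fin q, Fin (Qi i), dist (s x.1) (T x) ^ 2) := by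
    unfold Gdist
    refine le_antisymm ?_ ?_
    · exact ciInf_le (Finite.bddBelow_range _) (Equiv.refl _)
    · refine le_ciInf fun σ => ?_
      apply Real.sqrt_le_sqrt
      calc ∑ x : Σ i : Fin q, Fin (Qi i), dist (s x.1) (T x) ^ 2
          = ∑ x : Σ i : Fin q, Fin (Qi i), dist (s (σ x).1) (T (σ x)) ^ 2 :=
            (Equiv.sum_comp σ (fun x => dist (s x.1) (T x) ^ 2)).symm
        _ ≤ ∑ x : Σ i : Fin q, Fin (Qi i), dist (s x.1) (T (σ x)) ^ 2 := by
            refine Finset.sum_le_sum fun x _ => ?_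
            have h1 := hkey x.1 (σ x)
            have h0 : (0:ℝ) ≤ dist (s (σ x).1) (T (σ x)) := dist_nonneg
            nlinarith
  have hblock : ∀ i : Fin q,
      Gdist (fun j : Fin (Qi i) => T ⟨i, j⟩) (fun _ : Fin (Qi i) => s i)
        = Real.sqrt (∑ j : Fin (Qi i), dist (T ⟨i, j⟩) (s i) ^ 2) := by
    intro i
    unfold Gdist
    exact ciInf_const
  rw [hval, Real.sq_sqrt (by positivity)]
  rw [← Finset.univ_sigma_univ, Finset.sum_sigma]
  refine Finset.sum_congr rfl fun i _ => ?_
  rw [hblock i, Real.sq_sqrt (by positivity)]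
  simp [dist_comm]
end

section
/- Let 0 < ε < 1/8 and set β̃(ε,Q) = (ε + (Q−1)/β(ε,Q))^{−1}, where β(ε,Q) = (ε/3)^{3^Q}. Then for every T ∈ 𝒜_Q(ℝⁿ) there exist q ≤ Q and points S_0, S_1, …, S_q ∈ 𝒜_Q(ℝⁿ) such that S_0 = Q⟦t⟧ for some t ∈ spt(T), S_q = T, and: (1) spt(S_k) ⊂ spt(T) for every k = 0, …, q; (2) for every k = 0, …, q, spt(T) ⊂ 𝒫_ε(S_k) and T is balanced with respect to S_k and ε (with the convention that 𝒫_ε(S) = ℝⁿ and every T is balanced when S is a single Q-fold point Q⟦t⟧); (3) β̃(ε,Q)^k · 𝒢(S_{k−1}, S_k) ≤ sep(S_k) for every k = 1, …, q. -/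
open scoped BigOperators ENNReal

/-- The separation `sep(S) = min {|p_i - p_j| : p_i ≠ p_j}` of a `Q`-point,
with value `+∞` when all the points coincide. -/
noncomputable def sepE {n Q : ℕ} (p : Fin Q → EuclideanSpace ℝ (Fin n)) : ℝ≥0∞ :=
  ⨅ (i : Fin Q) (j : Fin Q) (_ : p i ≠ p j), edist (p i) (p j)

/-- The quantity `r_i(S)`: the distance from the point `p i` of `S` to the nearest
distinct point of `S`, with value `+∞` when `S` is a single `Q`-fold point. -/
noncomputable def rsepE {n Q : ℕ} (p : Fin Q → EuclideanSpace ℝ (Fin n)) (i : Fin Q) : ℝ≥0∞ :=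
  ⨅ (j : Fin Q) (_ : p j ≠ p i), edist (p i) (p j)

/-- A point with index `x` lies in the projection neighborhood `𝒫_ε(S)`, namely in the
ball `B_{ε r_i}` around the `i`-th point of `S` (with the convention `𝒫_ε(S) = ℝⁿ` when
`S` is a single `Q`-fold point, since then `r_i = ∞`). -/
def InProjNbhd {n Q : ℕ} (ε : ℝ) (p : Fin Q → EuclideanSpace ℝ (Fin n))
    (x : EuclideanSpace ℝ (Fin n)) (i : Fin Q) : Prop :=
  edist x (p i) < ENNReal.ofReal ε * rsepE p i

/-!
Join two points of `T` when their distance is at most `t`, and let `S(t)` move every point of `T`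
to a canonical representative of its cluster. Along the scales `t_j = R μ^j`, `μ = ε / (3Q)`,
starting above the diameter, the clusters refine and their number increases at most `Q - 1`
times. At a scale where the partition did not change from the previous one, distinct clusters
are more than `t_j / μ` apart while each cluster has diameter at most `(Q - 1) t_j`, so `T` is
balanced with respect to `S(t_j)`. The chain takes the first such stable scale after each run of
changes; runs are shorter than `Q`, so between consecutive links the points move by at most
`Q (Q - 1) t_a` while the new separation is at least `μ^(Q - 1) t_a`, and `(ε / 3)^(3^Q)` is small
enough to absorb this ratio.
-/

theorem exists_pos_forall_dist_le {ι α : Type*} [Finite ι] [PseudoMetricSpace α] (f : ι → α) :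
    ∃ R > 0, ∀ i j, dist (f i) (f j) ≤ R := by
  obtain ⟨C, hC⟩ := Metric.isBounded_iff.1 (Set.finite_range f).isBounded
  exact ⟨max C 1, by positivity, fun i j => (hC ⟨i, rfl⟩ ⟨j, rfl⟩).trans (le_max_left _ _)⟩

namespace QPoint

variable {n Q : ℕ}

section Clusters

variable (T : Fin Q → EuclideanSpace ℝ (Fin n)) (t : ℝ)

def thresholdGraph : SimpleGraph (Fin Q) :=
  SimpleGraph.fromRel fun x y => dist (T x) (T y) ≤ t

noncomputable def cluster (x : Fin Q) : Finset (Fin Q) :=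
  open Classical in Finset.univ.filter fun y => (thresholdGraph T t).Reachable y x

theorem mem_cluster {x y : Fin Q} : y ∈ cluster T t x ↔ (thresholdGraph T t).Reachable y x := by
  simp [cluster]

/-- Taking the least index makes the representative depend only on the cluster, so equal
partitions at two scales give equal representatives. -/
noncomputable def rep (x : Fin Q) : EuclideanSpace ℝ (Fin n) :=
  T ((cluster T t x).min' ⟨x, (mem_cluster T t).2 .rfl⟩)

noncomputable def numClusters : ℕ :=
  Nat.card (thresholdGraph T t).ConnectedComponent

theorem exists_reachable_rep_eq (x : Fin Q) :
    ∃ m, (thresholdGraph T t).Reachable m x ∧ rep T t x = T m :=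
  ⟨_, (mem_cluster T t).1 (Finset.min'_mem _ _), rfl⟩

variable {T t} {t' : ℝ} {x y : Fin Q}

theorem thresholdGraph_adj :
    (thresholdGraph T t).Adj x y ↔ x ≠ y ∧ dist (T x) (T y) ≤ t := by
  simp [thresholdGraph, dist_comm (T y)]

theorem thresholdGraph_mono (h : t' ≤ t) : thresholdGraph T t' ≤ thresholdGraph T t :=
  fun x y hxy => by
    rw [thresholdGraph_adj] at hxy ⊢
    exact ⟨hxy.1, hxy.2.trans h⟩

theorem reachable_of_dist_le (h : dist (T x) (T y) ≤ t) : (thresholdGraph T t).Reachable x y := by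
  rcases eq_or_ne x y with rfl | hxy
  · rfl
  · exact (thresholdGraph_adj.2 ⟨hxy, h⟩).reachable

theorem lt_dist_of_not_reachable (h : ¬ (thresholdGraph T t).Reachable x y) :
    t < dist (T x) (T y) :=
  not_le.1 fun h' => h (reachable_of_dist_le h')

theorem dist_le_length_mul (p : (thresholdGraph T t).Walk x y) :
    dist (T x) (T y) ≤ p.length * t := by
  induction p with
  | nil => simp
  | cons hadj p ih =>
    rw [SimpleGraph.Walk.length_cons, Nat.cast_succ, add_mul, one_mul, add_comm]
    exact (dist_triangle _ _ _).trans (add_le_add (thresholdGraph_adj.1 hadj).2 ih)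

theorem dist_le_of_reachable (ht : 0 ≤ t) (h : (thresholdGraph T t).Reachable x y) :
    dist (T x) (T y) ≤ (Q - 1) * t := by
  obtain ⟨p, hp⟩ := h.exists_isPath
  have hlen : (p.length : ℝ) ≤ Q - 1 := by
    have := hp.length_lt
    rw [Fintype.card_fin] at this
    rw [le_sub_iff_add_le]
    exact_mod_cast this
  exact (dist_le_length_mul p).trans (mul_le_mul_of_nonneg_right hlen ht)

theorem eq_of_reachable (hsmall : ∀ a b, T a ≠ T b → t < dist (T a) (T b))
    (h : (thresholdGraph T t).Reachable x y) : T x = T y := by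
  obtain ⟨p⟩ := h
  induction p with
  | nil => rfl
  | cons hadj _ ih =>
    refine Eq.trans ?_ ih
    by_contra hne
    exact (hsmall _ _ hne).not_ge (thresholdGraph_adj.1 hadj).2

theorem rep_eq_of_reachable (h : (thresholdGraph T t).Reachable x y) : rep T t x = rep T t y := by
  have : cluster T t x = cluster T t y := by
    ext z
    simp only [mem_cluster]
    exact ⟨fun h' => h'.trans h, fun h' => h'.trans h.symm⟩
  simp only [rep, this]

theorem rep_eq_rep_iff (ht : 0 ≤ t) :
    rep T t x = rep T t y ↔ (thresholdGraph T t).Reachable x y := by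
  refine ⟨fun h => ?_, rep_eq_of_reachable⟩
  obtain ⟨m, hm, hxm⟩ := exists_reachable_rep_eq T t x
  obtain ⟨m', hm', hym'⟩ := exists_reachable_rep_eq T t y
  have : dist (T m) (T m') ≤ t := by rw [← hxm, ← hym', h, dist_self]; exact ht
  exact hm.symm.trans ((reachable_of_dist_le this).trans hm')

theorem rep_congr
    (h : ∀ x y, (thresholdGraph T t).Reachable x y ↔ (thresholdGraph T t').Reachable x y) :
    rep T t = rep T t' := by
  funext x
  have : cluster T t x = cluster T t' x := by
    ext z
    simp only [mem_cluster, h]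
  simp only [rep, this]

theorem range_rep_subset : Set.range (rep T t) ⊆ Set.range T := by
  rintro _ ⟨x, rfl⟩
  obtain ⟨m, -, hm⟩ := exists_reachable_rep_eq T t x
  exact ⟨m, hm.symm⟩

theorem dist_rep_le (ht : 0 ≤ t) (x : Fin Q) : dist (T x) (rep T t x) ≤ (Q - 1) * t := by
  obtain ⟨m, hm, hxm⟩ := exists_reachable_rep_eq T t x
  rw [hxm, dist_comm]
  exact dist_le_of_reachable ht hm

theorem dist_rep_rep_le (ht' : 0 ≤ t') (h : t' ≤ t) (x : Fin Q) :
    dist (rep T t x) (rep T t' x) ≤ (Q - 1) * t := by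
  obtain ⟨m, hm, hxm⟩ := exists_reachable_rep_eq T t' x
  rw [hxm, rep_eq_of_reachable (hm.symm.mono (thresholdGraph_mono h)), dist_comm]
  exact dist_rep_le (ht'.trans h) m

theorem rep_eq_self (hsmall : ∀ a b, T a ≠ T b → t < dist (T a) (T b)) : rep T t = T := by
  funext x
  obtain ⟨m, hm, hxm⟩ := exists_reachable_rep_eq T t x
  rw [hxm, eq_of_reachable hsmall hm]

theorem exists_rep_eq_const (h : ∀ x y, dist (T x) (T y) ≤ t) (x₀ : Fin Q) :
    ∃ j, rep T t = fun _ => T j := by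
  obtain ⟨m, -, hm⟩ := exists_reachable_rep_eq T t x₀
  exact ⟨m, funext fun x => (rep_eq_of_reachable (reachable_of_dist_le (h x x₀))).trans hm⟩

theorem numClusters_le : numClusters T t ≤ Q :=
  (Nat.card_le_card_of_surjective _ Quot.mk_surjective).trans (Nat.card_fin Q).le

theorem numClusters_pos (x : Fin Q) : 0 < numClusters T t :=
  have : Nonempty (thresholdGraph T t).ConnectedComponent := ⟨.mk _ x⟩
  Nat.card_pos

theorem numClusters_anti (h : t' ≤ t) : numClusters T t ≤ numClusters T t' :=
  SimpleGraph.ConnectedComponent.card_le_card_of_le (thresholdGraph_mono h)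

theorem reachable_iff_of_numClusters_eq (h : t' ≤ t) (hN : numClusters T t = numClusters T t') :
    (thresholdGraph T t).Reachable x y ↔ (thresholdGraph T t').Reachable x y := by
  refine ⟨fun hxy => ?_, fun hxy => hxy.mono (thresholdGraph_mono h)⟩
  have hinj := ((SimpleGraph.ConnectedComponent.surjective_map_ofLE
    (thresholdGraph_mono h)).bijective_of_nat_card_le hN.ge).injective
  rw [← SimpleGraph.ConnectedComponent.eq] at hxy ⊢
  apply hinj
  rw [SimpleGraph.ConnectedComponent.map_mk, SimpleGraph.ConnectedComponent.map_mk]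
  exact hxy

theorem rep_eq_of_numClusters_eq (h : t' ≤ t) (hN : numClusters T t = numClusters T t') :
    rep T t = rep T t' :=
  rep_congr fun _ _ => reachable_iff_of_numClusters_eq h hN

def ClustersSeparated (T : Fin Q → EuclideanSpace ℝ (Fin n)) (t s : ℝ) : Prop :=
  ∀ x y, ¬ (thresholdGraph T t).Reachable x y → s < dist (T x) (T y)

theorem clustersSeparated_of_numClusters_eq (h : t' ≤ t)
    (hN : numClusters T t = numClusters T t') : ClustersSeparated T t' t :=
  fun _ _ hxy => lt_dist_of_not_reachable (mt (reachable_iff_of_numClusters_eq h hN).1 hxy)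

end Clusters

def IsBalanced (ε : ℝ) (S T : Fin Q → EuclideanSpace ℝ (Fin n)) : Prop :=
  (∀ x, ∃ i, InProjNbhd ε S (T x) i) ∧
    ∀ i, Nat.card {x : Fin Q // InProjNbhd ε S (T x) i} = Nat.card {j : Fin Q // S j = S i}

section Separated

variable {T : Fin Q → EuclideanSpace ℝ (Fin n)} {t s ε : ℝ} {x y : Fin Q}

theorem lt_dist_rep_of_ne (hsep : ClustersSeparated T t s) (h : rep T t x ≠ rep T t y) :
    s < dist (rep T t x) (rep T t y) := by
  obtain ⟨m, hm, hxm⟩ := exists_reachable_rep_eq T t x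
  obtain ⟨m', hm', hym'⟩ := exists_reachable_rep_eq T t y
  rw [hxm, hym']
  exact hsep m m' fun hmm' => h (rep_eq_of_reachable (hm.symm.trans (hmm'.trans hm')))

theorem ofReal_le_rsepE_rep (hsep : ClustersSeparated T t s) (i : Fin Q) :
    ENNReal.ofReal s ≤ rsepE (rep T t) i :=
  le_iInf₂ fun _ hj => by
    rw [edist_dist]
    exact ENNReal.ofReal_le_ofReal (lt_dist_rep_of_ne hsep (Ne.symm hj)).le

theorem ofReal_le_sepE_rep (hsep : ClustersSeparated T t s) :
    ENNReal.ofReal s ≤ sepE (rep T t) :=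
  le_iInf fun _ => le_iInf₂ fun _ hij => by
    rw [edist_dist]
    exact ENNReal.ofReal_le_ofReal (lt_dist_rep_of_ne hsep hij).le

theorem inProjNbhd_rep_iff (hε0 : 0 < ε) (hε : ε ≤ 3 / 4) (ht : 0 ≤ t) (hs : 0 < s)
    (hts : 3 * ((Q - 1) * t) ≤ ε * s) (hsep : ClustersSeparated T t s) {i : Fin Q} :
    InProjNbhd ε (rep T t) (T x) i ↔ (thresholdGraph T t).Reachable x i := by
  have hx := dist_rep_le (T := T) ht x
  constructor
  · contrapose
    intro hxi
    have hne : rep T t i ≠ rep T t x := fun h => hxi ((rep_eq_rep_iff ht).1 h.symm)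
    have hD := lt_dist_rep_of_ne hsep hne
    have hfar : ε * dist (rep T t i) (rep T t x) ≤ dist (T x) (rep T t i) := by
      have := dist_triangle_left (rep T t i) (rep T t x) (T x)
      nlinarith [mul_le_mul_of_nonneg_right hε (hs.trans hD).le, mul_lt_mul_of_pos_left hD hε0]
    rw [InProjNbhd, not_lt]
    calc ENNReal.ofReal ε * rsepE (rep T t) i
        ≤ ENNReal.ofReal ε * edist (rep T t i) (rep T t x) := by
          gcongr
          exact iInf₂_le x hne.symm
      _ = ENNReal.ofReal (ε * dist (rep T t i) (rep T t x)) := by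
          rw [edist_dist, ENNReal.ofReal_mul hε0.le]
      _ ≤ edist (T x) (rep T t i) := by
          rw [edist_dist]
          exact ENNReal.ofReal_le_ofReal hfar
  · intro hxi
    rw [InProjNbhd, edist_dist, ← rep_eq_of_reachable hxi]
    calc ENNReal.ofReal (dist (T x) (rep T t x))
        ≤ ENNReal.ofReal ((Q - 1) * t) := ENNReal.ofReal_le_ofReal hx
      _ < ENNReal.ofReal (ε * s) := by
          rw [ENNReal.ofReal_lt_ofReal_iff (by positivity)]
          nlinarith
      _ ≤ ENNReal.ofReal ε * rsepE (rep T t) i := by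
          rw [ENNReal.ofReal_mul hε0.le]
          gcongr
          exact ofReal_le_rsepE_rep hsep i

theorem isBalanced_rep (hε0 : 0 < ε) (hε : ε ≤ 3 / 4) (ht : 0 ≤ t) (hs : 0 < s)
    (hts : 3 * ((Q - 1) * t) ≤ ε * s) (hsep : ClustersSeparated T t s) :
    IsBalanced ε (rep T t) T :=
  have hiff {x i : Fin Q} := inProjNbhd_rep_iff (x := x) (i := i) hε0 hε ht hs hts hsep
  ⟨fun x => ⟨x, hiff.2 .rfl⟩, fun _ => Nat.card_congr <|
    (Equiv.subtypeEquivRight fun _ => hiff).trans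
      (Equiv.subtypeEquivRight fun _ => rep_eq_rep_iff ht).symm⟩

end Separated

theorem Gdist_le_sqrt_card_mul {ι : Type*} [Fintype ι] {p s : ι → EuclideanSpace ℝ (Fin n)} {B : ℝ}
    (hB : 0 ≤ B) (h : ∀ i, dist (p i) (s i) ≤ B) : Gdist p s ≤ √(Fintype.card ι) * B := by
  have hid : Gdist p s ≤ √(∑ i, dist (p i) (s i) ^ 2) :=
    ciInf_le ⟨0, by rintro _ ⟨σ, rfl⟩; positivity⟩ (1 : Equiv.Perm ι)
  refine hid.trans ?_
  rw [← Real.sqrt_sq hB, ← Real.sqrt_mul (Nat.cast_nonneg _)]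
  gcongr
  calc ∑ i, dist (p i) (s i) ^ 2 ≤ ∑ _i : ι, B ^ 2 :=
        Finset.sum_le_sum fun i _ => pow_le_pow_left₀ dist_nonneg (h i) 2
    _ = Fintype.card ι * B ^ 2 := by simp

theorem mul_self_add_le_three_pow (Q : ℕ) : Q * Q + Q ≤ 3 ^ Q + 1 := by
  induction Q with
  | zero => simp
  | succ Q ih =>
    have : Q + 1 ≤ 3 ^ Q := Nat.lt_pow_self (by norm_num)
    rw [pow_succ]
    nlinarith

theorem pow_self_mul_pow_le_one {Q m : ℕ} (hm : Q * Q ≤ m) {x : ℝ} (hx0 : 0 ≤ x)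
    (hx : x ≤ 1 / 2) : (Q : ℝ) ^ Q * x ^ m ≤ 1 :=
  calc (Q : ℝ) ^ Q * x ^ m ≤ (2 ^ Q) ^ Q * (1 / 2) ^ m := by
        gcongr; exact_mod_cast Nat.lt_two_pow_self.le
    _ ≤ 2 ^ m * (1 / 2) ^ m := by
        rw [← pow_mul]; gcongr; norm_num
    _ = 1 := by rw [← mul_pow]; norm_num

noncomputable def betaTilde (ε : ℝ) (Q : ℕ) : ℝ :=
  (ε + ((Q : ℝ) - 1) / (ε / 3) ^ (3 ^ Q))⁻¹

theorem betaTilde_pow_mul_le {ε : ℝ} {Q k : ℕ} (hε0 : 0 < ε) (hε : ε ≤ 3 / 2) (hk : k ≠ 0) :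
    betaTilde ε Q ^ k * (Q * (Q - 1)) ≤ (ε / (3 * Q)) ^ (Q - 1) := by
  rcases le_or_gt Q 1 with hQ | hQ
  · have : (Q : ℝ) * (Q - 1) = 0 := by interval_cases Q <;> norm_num
    rw [this, mul_zero]
    positivity
  have hQ1 : (1 : ℝ) ≤ Q - 1 := by
    rw [le_sub_iff_add_le]; exact_mod_cast hQ
  have hx : ε / 3 ≤ 1 / 2 := by linarith
  have hβ : betaTilde ε Q ≤ (ε / 3) ^ 3 ^ Q / (Q - 1) :=
    calc betaTilde ε Q ≤ (((Q : ℝ) - 1) / (ε / 3) ^ 3 ^ Q)⁻¹ :=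
          inv_anti₀ (by positivity) (le_add_of_nonneg_left hε0.le)
      _ = _ := inv_div _ _
  have hβ1 : betaTilde ε Q ≤ 1 := hβ.trans <| (div_le_one (by linarith)).2 <|
    (pow_le_one₀ (by positivity) (by linarith)).trans hQ1
  have hsplit : (ε / 3) ^ 3 ^ Q = (ε / 3) ^ (Q - 1) * (ε / 3) ^ (3 ^ Q - (Q - 1)) := by
    rw [← pow_add, Nat.add_sub_cancel'
      ((Nat.sub_le Q 1).trans (Nat.lt_pow_self (by norm_num : 1 < 3)).le)]
  have hpow : (Q : ℝ) ^ (Q - 1) * Q = Q ^ Q := by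
    rw [← pow_succ, Nat.sub_add_cancel hQ.le]
  calc betaTilde ε Q ^ k * (Q * (Q - 1))
      ≤ betaTilde ε Q * (Q * (Q - 1)) :=
        mul_le_mul_of_nonneg_right (pow_le_of_le_one (by unfold betaTilde; positivity) hβ1 hk)
          (mul_nonneg (Nat.cast_nonneg _) (by linarith))
    _ = Q * (betaTilde ε Q * (Q - 1)) := by ring
    _ ≤ Q * (ε / 3) ^ 3 ^ Q := by gcongr; exact (le_div_iff₀ (by linarith)).1 hβ
    _ = (ε / 3) ^ (Q - 1) / Q ^ (Q - 1) * (Q ^ Q * (ε / 3) ^ (3 ^ Q - (Q - 1))) := by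
        rw [hsplit, ← hpow]
        field_simp
    _ ≤ (ε / (3 * Q)) ^ (Q - 1) := by
        rw [← div_div, div_pow (ε / 3)]
        refine mul_le_of_le_one_right (by positivity)
          (pow_self_mul_pow_le_one ?_ (by positivity) hx)
        have := mul_self_add_le_three_pow Q
        generalize Q * Q = P at *
        omega

section Chain

variable {N : ℕ → ℕ}

theorem add_le_of_lt_succ {a : ℕ} :
    ∀ m, (∀ j, a ≤ j → j < a + m → N j < N (j + 1)) → N a + m ≤ N (a + m)
  | 0, _ => le_rfl
  | m + 1, h => by
    have := add_le_of_lt_succ m fun j hj hjm => h j hj (by omega)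
    have := h (a + m) (by omega) (by omega)
    show N a + (m + 1) ≤ N (a + m + 1)
    omega

theorem exists_succ_eq_of_bounded (hN : Monotone N) (hNQ : ∀ j, N j ≤ Q) {a : ℕ} (ha : 0 < N a) :
    ∃ j, a ≤ j ∧ j < a + Q ∧ N (j + 1) = N j := by
  by_contra! h
  have := add_le_of_lt_succ Q fun j hj hjQ =>
    (hN j.le_succ).lt_of_ne (h j hj hjQ).symm
  have := hNQ (a + Q)
  omega

theorem exists_next_link (hN : Monotone N) (hNQ : ∀ j, N j ≤ Q) {j₀ : ℕ} (h₀ : 0 < N j₀)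
    (hj₀ : ∃ j, N j₀ < N j) :
    ∃ a b, j₀ ≤ a ∧ N a = N j₀ ∧ a < b ∧ b ≤ a + Q ∧ N (b - 1) = N b ∧ N j₀ < N b := by
  classical
  set c := Nat.find hj₀
  have hc : N j₀ < N c := Nat.find_spec hj₀
  have hj₀c : j₀ < c := lt_of_not_ge fun h => (hN h).not_gt hc
  have hNa : N (c - 1) = N j₀ :=
    le_antisymm (not_lt.1 (Nat.find_min hj₀ (by omega))) (hN (by omega))
  obtain ⟨j, hj, hjQ, hjN⟩ := exists_succ_eq_of_bounded hN hNQ (a := c - 1) (hNa ▸ h₀)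
  exact ⟨c - 1, j + 1, by omega, hNa, by omega, by omega, hjN.symm, hc.trans_le (hN (by omega))⟩

theorem exists_chain_from (hN : Monotone N) (hNQ : ∀ j, N j ≤ Q) (j₀ : ℕ) (h₀ : 0 < N j₀)
    (hj₀ : N (j₀ - 1) = N j₀) :
    ∃ q ≤ Q - N j₀, ∃ J : ℕ → ℕ, J 0 = j₀ ∧ (∀ j, J q ≤ j → N j = N (J q)) ∧
      (∀ k ≤ q, N (J k - 1) = N (J k)) ∧
      ∀ k < q, ∃ a, J k ≤ a ∧ N a = N (J k) ∧ a < J (k + 1) ∧ J (k + 1) ≤ a + Q := by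
  by_cases hconst : ∀ j, j₀ ≤ j → N j = N j₀
  · exact ⟨0, Nat.zero_le _, fun _ => j₀, rfl, hconst, fun _ _ => hj₀,
      fun _ h => absurd h (Nat.not_lt_zero _)⟩
  push Not at hconst
  obtain ⟨j, hj, hne⟩ := hconst
  obtain ⟨a, b, hj₀a, hNa, hab, hbQ, hb, hlt⟩ :=
    exists_next_link hN hNQ h₀ ⟨j, (hN hj).lt_of_ne (Ne.symm hne)⟩
  have := hNQ b
  obtain ⟨q, hq, J, rfl, hJq, hJstable, hJstep⟩ := exists_chain_from hN hNQ b (h₀.trans hlt) hb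
  refine ⟨q + 1, by omega, fun | 0 => j₀ | k + 1 => J k, rfl, hJq, ?_, ?_⟩
  · rintro (_ | k) hk
    · exact hj₀
    · exact hJstable k (by omega)
  · rintro (_ | k) hk
    · exact ⟨a, hj₀a, hNa, hab, hbQ⟩
    · exact hJstep k (by omega)
termination_by Q - N j₀

/-- For `k = 0` the condition `N (J k - 1) = N (J k)` holds because `0 - 1 = 0` in `ℕ`. -/
theorem exists_chain (hN : Monotone N) (hNQ : ∀ j, N j ≤ Q) (h₀ : 0 < N 0) :
    ∃ q ≤ Q, ∃ J : ℕ → ℕ, J 0 = 0 ∧ (∀ j, J q ≤ j → N j = N (J q)) ∧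
      (∀ k ≤ q, N (J k - 1) = N (J k)) ∧
      ∀ k < q, ∃ a, J k ≤ a ∧ N a = N (J k) ∧ a < J (k + 1) ∧ J (k + 1) ≤ a + Q :=
  let ⟨q, hq, rest⟩ := exists_chain_from hN hNQ 0 h₀ rfl
  ⟨q, hq.trans (Nat.sub_le _ _), rest⟩

end Chain

noncomputable def scale (ε R : ℝ) (Q j : ℕ) : ℝ :=
  R * (ε / (3 * Q)) ^ j

section Scales

open Filter Topology

variable {T : Fin Q → EuclideanSpace ℝ (Fin n)} {ε R : ℝ}

theorem scale_pos (hQ : 0 < Q) (hε0 : 0 < ε) (hR : 0 < R) (j : ℕ) : 0 < scale ε R Q j := by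
  unfold scale; positivity

theorem scale_add (a m : ℕ) : scale ε R Q (a + m) = (ε / (3 * Q)) ^ m * scale ε R Q a := by
  unfold scale; ring

theorem scale_antitone (hQ : 0 < Q) (hε0 : 0 ≤ ε) (hε : ε ≤ 3) (hR : 0 ≤ R) :
    Antitone (scale ε R Q) := fun _ _ h =>
  mul_le_mul_of_nonneg_left (pow_le_pow_of_le_one (by positivity)
    (div_le_one_of_le₀ (by nlinarith [(Nat.one_le_cast (α := ℝ)).2 hQ]) (by positivity)) h) hR

theorem eventually_rep_scale_eq_self (hQ : 0 < Q) (hε0 : 0 ≤ ε) (hε : ε < 3) :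
    ∀ᶠ j in atTop, rep T (scale ε R Q j) = T := by
  have hμ : ε / (3 * Q) < 1 :=
    (div_lt_one (by positivity)).2 (by nlinarith [(Nat.one_le_cast (α := ℝ)).2 hQ])
  have hlim : Tendsto (scale ε R Q) atTop (𝓝 0) := by
    have := (tendsto_pow_atTop_nhds_zero_of_lt_one (by positivity) hμ).const_mul R
    rwa [mul_zero] at this
  have hsmall : ∀ᶠ t in 𝓝 (0 : ℝ), ∀ a b, T a ≠ T b → t < dist (T a) (T b) := by
    refine eventually_all.2 fun a => eventually_all.2 fun b => ?_
    by_cases h : T a = T b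
    · exact .of_forall fun _ hne => absurd h hne
    · exact (eventually_lt_nhds (dist_pos.2 h)).mono fun _ ht _ => ht
  exact (hlim.eventually hsmall).mono fun _ => rep_eq_self

theorem clustersSeparated_scale (hQ : 0 < Q) (hε0 : 0 < ε) (hε : ε ≤ 3) (hR0 : 0 ≤ R)
    (hR : ∀ x y, dist (T x) (T y) ≤ R) {j : ℕ}
    (hj : numClusters T (scale ε R Q (j - 1)) = numClusters T (scale ε R Q j)) :
    ClustersSeparated T (scale ε R Q j) (3 * Q * scale ε R Q j / ε) := by
  cases j with
  | zero => exact fun x y h => absurd (reachable_of_dist_le (by simpa [scale] using hR x y)) h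
  | succ j =>
    rw [Nat.add_sub_cancel] at hj
    have hstep : 3 * Q * scale ε R Q (j + 1) / ε = scale ε R Q j := by
      rw [scale_add, pow_one]
      field_simp
    rw [hstep]
    exact clustersSeparated_of_numClusters_eq (scale_antitone hQ hε0.le hε hR0 j.le_succ) hj

theorem isBalanced_rep_scale (hQ : 0 < Q) (hε0 : 0 < ε) (hε : ε ≤ 3 / 4) (hR0 : 0 < R)
    (hR : ∀ x y, dist (T x) (T y) ≤ R) {j : ℕ}
    (hj : numClusters T (scale ε R Q (j - 1)) = numClusters T (scale ε R Q j)) :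
    IsBalanced ε (rep T (scale ε R Q j)) T := by
  have ht := scale_pos hQ hε0 hR0 j
  refine isBalanced_rep hε0 hε ht.le (by positivity) ?_
    (clustersSeparated_scale hQ hε0 (by linarith) hR0.le hR hj)
  rw [mul_div_cancel₀ _ hε0.ne']
  nlinarith

theorem ofReal_betaTilde_pow_mul_Gdist_le (hε0 : 0 < ε) (hε : ε ≤ 3 / 2) (hR0 : 0 < R)
    {a b k : ℕ} (hk : k ≠ 0) (hab : a < b) (hbQ : b ≤ a + Q)
    (hb : numClusters T (scale ε R Q (b - 1)) = numClusters T (scale ε R Q b)) :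
    ENNReal.ofReal (betaTilde ε Q ^ k * Gdist (rep T (scale ε R Q a)) (rep T (scale ε R Q b)))
      ≤ sepE (rep T (scale ε R Q b)) := by
  have hQ : 0 < Q := by omega
  have hanti := scale_antitone hQ hε0.le (by linarith) hR0.le
  have hsep := clustersSeparated_of_numClusters_eq (T := T) (hanti (b.sub_le 1)) hb
  have hta := scale_pos hQ hε0 hR0 a
  have hQ1 : (0 : ℝ) ≤ Q - 1 := by
    rw [sub_nonneg]; exact_mod_cast hQ
  have hG : Gdist (rep T (scale ε R Q a)) (rep T (scale ε R Q b))
      ≤ Q * ((Q - 1) * scale ε R Q a) :=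
    calc _ ≤ √(Fintype.card (Fin Q)) * ((Q - 1) * scale ε R Q a) :=
          Gdist_le_sqrt_card_mul (by positivity) fun x =>
            dist_rep_rep_le (scale_pos hQ hε0 hR0 b).le (hanti hab.le) x
      _ ≤ Q * ((Q - 1) * scale ε R Q a) := by
          rw [Fintype.card_fin]
          gcongr
          exact Real.sqrt_le_self_iff.2 (Or.inr (Nat.one_le_cast.2 hQ))
  refine le_trans (ENNReal.ofReal_le_ofReal ?_) (ofReal_le_sepE_rep hsep)
  calc betaTilde ε Q ^ k * Gdist (rep T (scale ε R Q a)) (rep T (scale ε R Q b))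
      ≤ betaTilde ε Q ^ k * (Q * (Q - 1)) * scale ε R Q a := by
        rw [mul_assoc, mul_assoc]
        gcongr
        unfold betaTilde; positivity
    _ ≤ (ε / (3 * Q)) ^ (Q - 1) * scale ε R Q a := by
        gcongr; exact betaTilde_pow_mul_le hε0 hε hk
    _ = scale ε R Q (a + (Q - 1)) := (scale_add a (Q - 1)).symm
    _ ≤ scale ε R Q (b - 1) := hanti (by omega)

end Scales

end QPoint

open QPoint

/-- key combinatoric lemma. Let `0 < ε < 1/8`,
`β̃(ε,Q) = (ε + (Q−1)/β(ε,Q))⁻¹` with `β(ε,Q) = (ε/3)^(3^Q)`. For every `T ∈ 𝒜_Q(ℝⁿ)`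
there exist `q ≤ Q` and points `S_0, …, S_q ∈ 𝒜_Q(ℝⁿ)` with `S_0 = Q⟦t⟧` for some
`t ∈ spt(T)`, `S_q = T`, such that for every `k ≤ q`: (1) `spt(S_k) ⊂ spt(T)`;
(2) `spt(T) ⊂ 𝒫_ε(S_k)` and `T` is balanced with respect to `S_k` and `ε` (the number
of points of `T` in the ball around the `i`-th point of `S_k` equals the multiplicity
of that point in `S_k`); and (3) `β̃(ε,Q)^k · 𝒢(S_{k−1}, S_k) ≤ sep(S_k)` for `1 ≤ k ≤ q`. -/
theorem stmt3 (n Q : ℕ) (hQ : 0 < Q) (ε : ℝ) (hε0 : 0 < ε) (hε : ε < 1 / 8)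
    (T : Fin Q → EuclideanSpace ℝ (Fin n)) :
    ∃ q : ℕ, q ≤ Q ∧ ∃ S : ℕ → Fin Q → EuclideanSpace ℝ (Fin n),
      (∃ j : Fin Q, S 0 = fun _ => T j) ∧
      S q = T ∧
      (∀ k ≤ q, Set.range (S k) ⊆ Set.range T) ∧
      (∀ k ≤ q,
        (∀ x : Fin Q, ∃ i : Fin Q, InProjNbhd ε (S k) (T x) i) ∧
        (∀ i : Fin Q,
          Nat.card {x : Fin Q // InProjNbhd ε (S k) (T x) i}
            = Nat.card {j : Fin Q // S k j = S k i})) ∧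
      (∀ k, 1 ≤ k → k ≤ q →
        ENNReal.ofReal ((ε + ((Q : ℝ) - 1) / (ε / 3) ^ (3 ^ Q))⁻¹ ^ k
            * Gdist (S (k - 1)) (S k)) ≤ sepE (S k)) := by
  obtain ⟨R, hR0, hR⟩ := exists_pos_forall_dist_le T
  have hanti := scale_antitone hQ hε0.le (by linarith) hR0.le
  obtain ⟨q, hqQ, J, hJ0, hJq, hJstable, hJstep⟩ :=
    exists_chain (N := fun j => numClusters T (scale ε R Q j))
      (fun _ _ h => numClusters_anti (hanti h)) (fun _ => numClusters_le)
      (numClusters_pos ⟨0, hQ⟩)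
  refine ⟨q, hqQ, fun k => rep T (scale ε R Q (J k)), ?_, ?_, fun _ _ => range_rep_subset,
    fun k hk => isBalanced_rep_scale hQ hε0 (by linarith) hR0 hR (hJstable k hk), ?_⟩
  · simp only [hJ0, scale, pow_zero, mul_one]
    exact exists_rep_eq_const hR ⟨0, hQ⟩
  · obtain ⟨j, hj, hjT⟩ := ((Filter.eventually_ge_atTop (J q)).and
      (eventually_rep_scale_eq_self hQ hε0.le (by linarith))).exists
    exact (rep_eq_of_numClusters_eq (hanti hj) (hJq j hj).symm).trans hjT
  · rintro (_ | k) hk hkq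
    · omega
    obtain ⟨a, hka, hNa, hab, hbQ⟩ := hJstep k hkq
    simp only [Nat.add_sub_cancel, rep_eq_of_numClusters_eq (hanti hka) hNa.symm]
    exact ofReal_betaTilde_pow_mul_Gdist_le hε0 (by linarith) hR0 k.succ_ne_zero hab hbQ
      (hJstable _ hkq)
end

section
/- Let S = Σ_{i=1}^q Q_i⟦s_i⟧ ∈ 𝒜_Q(ℝⁿ) with the s_i pairwise distinct, q ≥ 2, Σ_{i=1}^q Q_i = Q, and let 0 < ε < 1/4. If T ∈ 𝒜_Q(ℝⁿ) satisfies spt(T) ⊂ 𝒫_ε(S) but T is not balanced with respect to S and ε, then 𝒢(S,T) ≥ (1−ε)·sep(S). -/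
open scoped BigOperators

/-- The separation of `S = Σ Q_i⟦s_i⟧` with the `s_i` pairwise distinct (`q ≥ 2`):
the minimum of `|s_i - s_j|` over pairs `i ≠ j`. -/
noncomputable def sepVal {n q : ℕ} (s : Fin q → EuclideanSpace ℝ (Fin n)) : ℝ :=
  ⨅ pr : {pr : Fin q × Fin q // pr.1 ≠ pr.2}, dist (s (pr : Fin q × Fin q).1) (s (pr : Fin q × Fin q).2)

set_option maxHeartbeats 1000000

/-- Let `S = Σ_{i=1}^q Q_i⟦s_i⟧ ∈ 𝒜_Q(ℝⁿ)` with the `s_i` pairwise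
distinct, `q ≥ 2`, `Σ Q_i = Q`, and `0 < ε < 1/4`. If `T ∈ 𝒜_Q(ℝⁿ)` (indexed here by
`Σ i, Fin (Q_i)`, an arbitrary labeling) has support contained in `𝒫_ε(S)` but is not
balanced with respect to `S` and `ε`, then `𝒢(S,T) ≥ (1−ε)·sep(S)`. -/
theorem stmt5 (n Q q : ℕ) (hq : 2 ≤ q) (ε : ℝ) (hε0 : 0 < ε) (hε : ε < 1 / 4)
    (s : Fin q → EuclideanSpace ℝ (Fin n)) (hs : Function.Injective s)
    (Qi : Fin q → ℕ) (hQi : ∀ i, 0 < Qi i) (hQ : ∑ i, Qi i = Q)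
    (T : (Σ i : Fin q, Fin (Qi i)) → EuclideanSpace ℝ (Fin n))
    (hspt : ∀ x : Σ i : Fin q, Fin (Qi i), ∃ i : Fin q, dist (T x) (s i) < ε * rsep s i)
    (hnb : ¬ ∀ i : Fin q,
        Nat.card {x : Σ i' : Fin q, Fin (Qi i') // dist (T x) (s i) < ε * rsep s i}
          = Qi i) :
    (1 - ε) * sepVal s ≤ Gdist (fun x : Σ i : Fin q, Fin (Qi i) => s x.1) T := by
  classical
  have hε1 : ε ≤ 1 := by linarith
  have hrle : ∀ i j : Fin q, j ≠ i → rsep s i ≤ dist (s i) (s j) := by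
    intro i j hj
    unfold rsep
    exact ciInf_le (Finite.bddBelow_range _) (⟨j, hj⟩ : {j' : Fin q // j' ≠ i})
  have hsep : ∀ i j : Fin q, i ≠ j → sepVal s ≤ dist (s i) (s j) := by
    intro i j hij
    unfold sepVal
    exact ciInf_le (Finite.bddBelow_range _) (⟨(i, j), hij⟩ : {pr : Fin q × Fin q // pr.1 ≠ pr.2})
  have huniq : ∀ (y : EuclideanSpace ℝ (Fin n)) (i j : Fin q),
      dist y (s i) < ε * rsep s i → dist y (s j) < ε * rsep s j → i = j := by
    intro y i j hi hj
    by_contra hne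
    have hd : 0 < dist (s i) (s j) := dist_pos.2 fun h => hne (hs h)
    have h1 : rsep s i ≤ dist (s i) (s j) := hrle i j (Ne.symm hne)
    have h2 : rsep s j ≤ dist (s i) (s j) := by
      have := hrle j i hne
      rwa [dist_comm] at this
    have htri : dist (s i) (s j) ≤ dist y (s i) + dist y (s j) := by
      have := dist_triangle (s i) y (s j)
      rwa [dist_comm (s i) y] at this
    nlinarith [mul_le_mul_of_nonneg_left h1 hε0.le, mul_le_mul_of_nonneg_left h2 hε0.le]
  push_neg at hnb
  obtain ⟨i0, hi0⟩ := hnb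
  have hcard : Nat.card {x : Σ i : Fin q, Fin (Qi i) // x.1 = i0} = Qi i0 := by
    have e : {x : Σ i : Fin q, Fin (Qi i) // x.1 = i0} ≃ Fin (Qi i0) :=
      { toFun := fun x => x.2 ▸ x.1.2
        invFun := fun k => ⟨⟨i0, k⟩, rfl⟩
        left_inv := by rintro ⟨⟨i, k⟩, rfl⟩; rfl
        right_inv := fun k => rfl }
    simpa using Nat.card_congr e
  refine le_ciInf fun σ => ?_
  have hexists : ∃ x : Σ i : Fin q, Fin (Qi i),
      ¬ dist (T (σ x)) (s x.1) < ε * rsep s x.1 := by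
    by_contra hall
    push_neg at hall
    have e2 : {x : Σ i : Fin q, Fin (Qi i) // x.1 = i0} ≃
        {y : Σ i : Fin q, Fin (Qi i) // dist (T y) (s i0) < ε * rsep s i0} :=
      { toFun := fun x => ⟨σ x.1, by have := hall x.1; rwa [x.2] at this⟩
        invFun := fun y => ⟨σ.symm y.1,
          huniq (T y.1) (σ.symm y.1).1 i0 (by simpa using hall (σ.symm y.1)) y.2⟩
        left_inv := fun x => Subtype.ext (by simp)
        right_inv := fun y => Subtype.ext (by simp) }
    exact hi0 ((Nat.card_congr e2.symm).trans hcard)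
  obtain ⟨x, hx⟩ := hexists
  obtain ⟨j, hj⟩ := hspt (σ x)
  have hji : j ≠ x.1 := by rintro rfl; exact hx hj
  have hd : sepVal s ≤ dist (s j) (s x.1) := hsep j x.1 hji
  have hrj : rsep s j ≤ dist (s j) (s x.1) := hrle j x.1 (Ne.symm hji)
  have htri : dist (s j) (s x.1) ≤ dist (T (σ x)) (s j) + dist (s x.1) (T (σ x)) := by
    have := dist_triangle (s j) (T (σ x)) (s x.1)
    rw [dist_comm (s j) (T (σ x)), dist_comm (T (σ x)) (s x.1)] at this
    exact this
  have hkey : (1 - ε) * sepVal s ≤ dist (s x.1) (T (σ x)) := by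
    have hεrj : ε * rsep s j ≤ ε * dist (s j) (s x.1) :=
      mul_le_mul_of_nonneg_left hrj hε0.le
    nlinarith [mul_le_mul_of_nonneg_left hd (by linarith : (0:ℝ) ≤ 1 - ε)]
  calc (1 - ε) * sepVal s ≤ dist (s x.1) (T (σ x)) := hkey
    _ = Real.sqrt (dist (s x.1) (T (σ x)) ^ 2) := (Real.sqrt_sq dist_nonneg).symm
    _ ≤ Real.sqrt (∑ x' : Σ i : Fin q, Fin (Qi i),
          dist ((fun x : Σ i : Fin q, Fin (Qi i) => s x.1) x') (T (σ x')) ^ 2) := by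
        apply Real.sqrt_le_sqrt
        exact Finset.single_le_sum
          (f := fun x' : Σ i : Fin q, Fin (Qi i) =>
            dist ((fun x : Σ i : Fin q, Fin (Qi i) => s x.1) x') (T (σ x')) ^ 2)
          (fun i _ => sq_nonneg _) (Finset.mem_univ x)
end

section
/- Let Q ≥ 1 be an integer, let I_1, …, I_q be a partition of {1, …, Q} into nonempty sets, and let σ be a permutation of {1, …, Q} such that σ(I_i) ≠ I_i for at least one i. Then there exist an integer k ≥ 2, pairwise distinct indices i_1, …, i_k ∈ {1, …, q}, and elements j_1, …, j_k with j_l ∈ I_{i_l} for every l = 1, …, k, such that σ(j_l) ∈ I_{i_{l+1}} for l = 1, …, k−1 and σ(j_k) ∈ I_{i_1}. -/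
open scoped BigOperators

/-- pigeonhole chain property. Let `Q ≥ 1`, let `I_1, …, I_q` be a
partition of `{1,…,Q}` into nonempty sets, and let `σ` be a permutation of `{1,…,Q}`
such that `σ(I_i) ≠ I_i` for at least one `i`. Then there exist `k ≥ 2` (written
`k = k' + 2` below), pairwise distinct indices `i_1, …, i_k` and elements
`j_l ∈ I_{i_l}` such that `σ(j_l) ∈ I_{i_{l+1}}` cyclically (indices mod `k`, so that
`σ(j_l) ∈ I_{i_{l+1}}` for `l = 1, …, k−1` and `σ(j_k) ∈ I_{i_1}`). -/
theorem stmt6 (Q q : ℕ) (hQ : 1 ≤ Q) (I : Fin q → Finset (Fin Q))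
    (hne : ∀ i, (I i).Nonempty)
    (hdisj : ∀ i j, i ≠ j → Disjoint (I i) (I j))
    (hcov : ∀ x : Fin Q, ∃ i, x ∈ I i)
    (σ : Equiv.Perm (Fin Q))
    (hσ : ∃ i, Finset.image (⇑σ) (I i) ≠ I i) :
    ∃ k' : ℕ, ∃ idx : Fin (k' + 2) → Fin q, Function.Injective idx ∧
      ∃ j : Fin (k' + 2) → Fin Q,
        (∀ l : Fin (k' + 2), j l ∈ I (idx l)) ∧
        (∀ l : Fin (k' + 2), σ (j l) ∈ I (idx (l + 1))) := by
  classical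
  -- From a "bad" block, find an element escaping it.
  have himg : ∀ i, Finset.image (⇑σ) (I i) ≠ I i → ∃ j ∈ I i, σ j ∉ I i := by
    intro i h
    by_contra hc
    push_neg at hc
    apply h
    apply Finset.eq_of_subset_of_card_le
    · intro y hy
      obtain ⟨j, hj, rfl⟩ := Finset.mem_image.mp hy
      exact hc j hj
    · rw [Finset.card_image_of_injective _ σ.injective]
  have key : ∀ i, Finset.image (⇑σ) (I i) ≠ I i →
      ∃ p : Fin q × Fin Q, p.1 ≠ i ∧ Finset.image (⇑σ) (I p.1) ≠ I p.1 ∧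
        p.2 ∈ I i ∧ σ p.2 ∈ I p.1 := by
    intro i h
    obtain ⟨j, hj, hj'⟩ := himg i h
    obtain ⟨i', hi'⟩ := hcov (σ j)
    have hii' : i' ≠ i := by rintro rfl; exact hj' hi'
    refine ⟨(i', j), hii', ?_, hj, hi'⟩
    intro heq
    have hjm : j ∈ I i' := by
      have h2 : σ j ∈ Finset.image (⇑σ) (I i') := by rw [heq]; exact hi'
      obtain ⟨j', hj'', hjj⟩ := Finset.mem_image.mp h2
      rwa [← σ.injective hjj]
    exact (Finset.disjoint_left.mp (hdisj i i' (Ne.symm hii')) hj) hjm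
  set g : Fin q → Fin q := fun i =>
    if h : Finset.image (⇑σ) (I i) ≠ I i then ((key i h).choose).1 else i with hgdef
  set w : Fin q → Fin Q := fun i =>
    if h : Finset.image (⇑σ) (I i) ≠ I i then ((key i h).choose).2 else ⟨0, hQ⟩ with hwdef
  have hg : ∀ i, Finset.image (⇑σ) (I i) ≠ I i →
      g i ≠ i ∧ Finset.image (⇑σ) (I (g i)) ≠ I (g i) ∧ w i ∈ I i ∧ σ (w i) ∈ I (g i) := by
    intro i h
    simp only [hgdef, hwdef, dif_pos h]
    exact (key i h).choose_spec
  obtain ⟨i0, hi0⟩ := hσ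
  -- the whole forward orbit of i0 consists of bad blocks
  have horb : ∀ n, Finset.image (⇑σ) (I (g^[n] i0)) ≠ I (g^[n] i0) := by
    intro n
    induction n with
    | zero => exact hi0
    | succ n ih => rw [Function.iterate_succ_apply']; exact (hg _ ih).2.1
  -- pigeonhole: the orbit repeats
  have hpig : ∃ a b : Fin (q + 1), a ≠ b ∧ g^[a.val] i0 = g^[b.val] i0 := by
    apply Fintype.exists_ne_map_eq_of_card_lt (fun n : Fin (q + 1) => g^[n.val] i0)
    simp
  obtain ⟨a, b, hab, heq⟩ := hpig
  -- WLOG a < b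
  obtain ⟨a, b, hab, heq⟩ : ∃ a b : ℕ, a < b ∧ g^[a] i0 = g^[b] i0 := by
    rcases lt_or_gt_of_ne hab with h | h
    · exact ⟨a.val, b.val, h, heq⟩
    · exact ⟨b.val, a.val, h, heq.symm⟩
  set x : Fin q := g^[a] i0 with hxdef
  have hxorb : ∀ n, Finset.image (⇑σ) (I (g^[n] x)) ≠ I (g^[n] x) := by
    intro n
    rw [hxdef, ← Function.iterate_add_apply]
    exact horb _
  have hper : ∃ n, 0 < n ∧ g^[n] x = x := by
    refine ⟨b - a, by omega, ?_⟩
    rw [hxdef, ← Function.iterate_add_apply]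
    have : b - a + a = b := by omega
    rw [this, ← heq]
  set p : ℕ := Nat.find hper with hpdef
  obtain ⟨hppos, hpfix⟩ := Nat.find_spec hper
  rw [← hpdef] at hppos hpfix
  have hp2 : 2 ≤ p := by
    by_contra h
    push_neg at h
    have hp1 : p = 1 := by omega
    rw [hp1, Function.iterate_one] at hpfix
    exact (hg x (hxorb 0)).1 hpfix
  have hmod : ∀ s t : ℕ, s < t → t < p → g^[s] x ≠ g^[t] x := by
    intro s t hst htp heq2
    have h1 : g^[t - s] x = x := by
      have e1 : g^[p - s] (g^[s] x) = x := by
        rw [← Function.iterate_add_apply]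
        have : p - s + s = p := by omega
        rw [this, hpfix]
      have e2 : g^[p - s] (g^[t] x) = g^[t - s] x := by
        rw [← Function.iterate_add_apply]
        have : p - s + t = (t - s) + p := by omega
        rw [this, Function.iterate_add_apply, hpfix]
      rw [heq2, e2] at e1
      exact e1
    exact Nat.find_min hper (m := t - s) (by omega) ⟨by omega, h1⟩
  have hpk : p - 2 + 2 = p := by omega
  refine ⟨p - 2, fun l => g^[l.val] x, ?_, fun l => w (g^[l.val] x), ?_, ?_⟩
  · intro s t h
    rcases lt_trichotomy s.val t.val with hlt | heqv | hlt
    · exact absurd h (hmod _ _ hlt (by omega))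
    · exact Fin.ext heqv
    · exact absurd h.symm (hmod _ _ hlt (by omega))
  · intro l
    exact (hg _ (hxorb l.val)).2.2.1
  · intro l
    have hstep : σ (w (g^[l.val] x)) ∈ I (g (g^[l.val] x)) := (hg _ (hxorb l.val)).2.2.2
    have hval : (l + 1).val = (l.val + 1) % (p - 2 + 2) := by
      simp [Fin.add_def]
    have hidx : g^[(l + 1).val] x = g (g^[l.val] x) := by
      rw [hval]
      rcases Nat.lt_or_ge (l.val + 1) (p - 2 + 2) with h | h
      · rw [Nat.mod_eq_of_lt h, Function.iterate_succ_apply']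
      · have hl : l.val + 1 = p := by have := l.isLt; omega
        have h0 : p % (p - 2 + 2) = 0 := by rw [hpk]; exact Nat.mod_self p
        rw [hl, h0, Function.iterate_zero_apply,
          ← Function.iterate_succ_apply' g l.val x, Nat.succ_eq_add_one, hl, hpfix]
    show σ (w (g^[l.val] x)) ∈ I (g^[(l + 1).val] x)
    rw [hidx]
    exact hstep
end
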